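/- Let S be a finite semigroup generated by a finite alphabet A, T^1 = KR_right(S,A)^1, and (𝒞, [0,1]) the Chiswell rooted tree built from the Lyndon–Chiswell length function D. Then the right action of T^1 on 𝒞 given by [k,β]·α = [k,βα] is well-defined (independent of representatives), for each α ∈ T^1 the map [k,β] ↦ [k,βα] is an elliptic map of (𝒞,[0,1]), and the resulting map ε': T^1 → EM(𝒞,[0,1])^op is an injective monoid homomorphism (equivalently, α ↦ ([k,β] ↦ [k,βα]) is an injective monoid anti-homomorphism into EM(𝒞,[0,1])). -/

import Mathlib

/-!
A transition edge strictly descends in the `J`-order of `S¹`: if `s·a` could climb back to the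
`J`-class of a vertex `c ≥_R s`, stability of the finite monoid `S¹` would give a path from `s·a`
back to `s`. Hence the endpoint heights strictly increase along a transition-edge sequence.
Right multiplication by `α` appends edges to both sequences, so `ξ(βα, β'α) ≥ ξ(β, β')`, and
either the branch point moves strictly deeper or it stays and the next-edge comparison
can only improve; either way `D(βα, β'α) ≥ D(β, β')`, which makes `[k,β] ↦ [k,βα]` well defined.
It preserves depth and edges by construction. For injectivity, `D(α, α') < ℓ` unless `α = α'`
in `T¹`, so `[ℓ, α] = [ℓ, α']` forces `α = α'`; the degenerate case `ℓ = 0` only occurs when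
`S` is empty, and then properness of `θ` forces `A` to be empty.
-/

open scoped Classical

namespace KRHolonomy

/-- Green's quasi-order `≤_J` on a monoid: `a ≤_J b` iff `a ∈ M b M`. -/
def leJ {M : Type*} [Monoid M] (a b : M) : Prop := ∃ x y : M, a = x * b * y

/-- `a <_J b` iff `a ≤_J b` and not `b ≤_J a`. -/
def ltJ {M : Type*} [Monoid M] (a b : M) : Prop := leJ a b ∧ ¬ leJ b a

/-- Green's quasi-order `≤_R` on a monoid: `a ≤_R b` iff `a ∈ b M`. -/
def leR {M : Type*} [Monoid M] (a b : M) : Prop := ∃ x : M, a = b * x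

/-- `a <_R b` iff `a ≤_R b` and not `b ≤_R a`. -/
def ltR {M : Type*} [Monoid M] (a b : M) : Prop := leR a b ∧ ¬ leR b a

/-- Green's quasi-order `≤_L` on a monoid: `a ≤_L b` iff `a ∈ M b`. -/
def leL {M : Type*} [Monoid M] (a b : M) : Prop := ∃ x : M, a = x * b

/-- `a <_L b` iff `a ≤_L b` and not `b ≤_L a`. -/
def ltL {M : Type*} [Monoid M] (a b : M) : Prop := leL a b ∧ ¬ leL b a

/-- The Dedekind height function: `height x` is the largest `k` such that there is a chain
`x₀ >_J x₁ >_J ⋯ >_J x_k = x`. -/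
noncomputable def height {M : Type*} [Monoid M] (x : M) : ℕ :=
  sSup {k | ∃ c : ℕ → M, c k = x ∧ ∀ i < k, ltJ (c (i + 1)) (c i)}

variable {A S : Type*} [Semigroup S]

/-- The edge `(s, a, s·θ(a))` of the right Cayley graph of `(S,A)` is a transition edge:
there is no path in the right Cayley graph from `s·θ(a)` back to `s`. -/
def IsTransitionEdge (θ : FreeMonoid A →* WithOne S) (s : WithOne S) (a : A) : Prop :=
  ¬ ∃ w : FreeMonoid A, s * θ (FreeMonoid.of a) * θ w = s

/-- The (ordered) sequence of transition edges along the path of the right Cayley graph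
starting at `s` and reading the word `u`; an edge is recorded as a pair (source, label). -/
noncomputable def transEdgesFrom (θ : FreeMonoid A →* WithOne S) :
    WithOne S → List A → List (WithOne S × A)
  | _, [] => []
  | s, a :: w =>
      (if IsTransitionEdge θ s a then [(s, a)] else []) ++
        transEdgesFrom θ (s * θ (FreeMonoid.of a)) w

/-- The sequence of transition edges of the path starting at `1` reading `u`. -/
noncomputable def transEdges (θ : FreeMonoid A →* WithOne S) (u : FreeMonoid A) :
    List (WithOne S × A) :=
  transEdgesFrom θ 1 (FreeMonoid.toList u)

/-- The congruence (`τ_r`, together with `(1,1)`) defining the right Karnofsky–Rhodes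
expansion: two words of `A^*` represent the same element of `KR_right(S,A)¹` iff they are
both empty or both nonempty, they have the same image in `S¹` and the same sequence of
transition edges. -/
def KRrel (θ : FreeMonoid A →* WithOne S) (u v : FreeMonoid A) : Prop :=
  (u = 1 ∧ v = 1) ∨
    (u ≠ 1 ∧ v ≠ 1 ∧ θ u = θ v ∧ transEdges θ u = transEdges θ v)

/-- Green's quasi-order `≤_J` on `T¹ = KR_right(S,A)¹`, expressed on word representatives:
`u ≤_J v` iff `u = p v q` holds in `T¹` for some `p, q ∈ T¹`. -/
def leJT (θ : FreeMonoid A →* WithOne S) (u v : FreeMonoid A) : Prop :=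
  ∃ p q : FreeMonoid A, KRrel θ u (p * v * q)

/-- `<_J` on `T¹ = KR_right(S,A)¹`, expressed on word representatives. -/
def ltJT (θ : FreeMonoid A →* WithOne S) (u v : FreeMonoid A) : Prop :=
  leJT θ u v ∧ ¬ leJT θ v u

/-- The Dedekind height function on `T¹ = KR_right(S,A)¹`, expressed on word
representatives: the largest `k` such that there is a chain
`t₀ >_J t₁ >_J ⋯ >_J t_k = t` in `T¹`. -/
noncomputable def heightT (θ : FreeMonoid A →* WithOne S) (u : FreeMonoid A) : ℕ :=
  sSup {k | ∃ c : ℕ → FreeMonoid A, KRrel θ (c k) u ∧ ∀ i < k, ltJT θ (c (i + 1)) (c i)}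

/-- `ℓ = 2 · max { h(s) : s ∈ S¹ }`. -/
noncomputable def ell (S : Type*) [Semigroup S] : ℕ :=
  2 * sSup (Set.range fun s : WithOne S => height s)

/-- `ξ(u,v)`: the largest `i` (with `0 ≤ i ≤ m`, `m` the number of transition edges of `u`)
such that the first `i` transition edges of `u` and of `v` agree. -/
noncomputable def xi (θ : FreeMonoid A →* WithOne S) (u v : FreeMonoid A) : ℕ :=
  sSup {i | i ≤ (transEdges θ u).length ∧
    (transEdges θ u).take i = (transEdges θ v).take i}

/-- The endpoint of an edge `(s, a)` of the right Cayley graph, namely `s·θ(a)`. -/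
def edgeEnd (θ : FreeMonoid A →* WithOne S) (e : WithOne S × A) : WithOne S :=
  e.1 * θ (FreeMonoid.of e.2)

/-- The Lyndon–Chiswell length function `D` on `T¹ = KR_right(S,A)¹`, expressed on word
representatives.  With `k = ξ(u,v)` (and indexing the transition edges from `1` as in the
paper, so that `E_k` sits at list index `k-1`):
`D(u,v) = ℓ` if `u = v` in `T¹`; `D(u,v) = 0` if `u ≠ v` in `T¹` and `k = 0`;
`D(u,v) = 2·h(end(E_k))` if `k > 0`, `E_{k+1}` and `E'_{k+1}` both exist and have the same
endpoint; and `D(u,v) = 2·h(end(E_k)) - 1` in all remaining cases. -/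
noncomputable def lcD (θ : FreeMonoid A →* WithOne S) (u v : FreeMonoid A) : ℕ :=
  if KRrel θ u v then ell S
  else if xi θ u v = 0 then 0
  else
    let k := xi θ u v
    let base := (transEdges θ u)[k - 1]?.elim 0 fun e => height (edgeEnd θ e)
    if ∃ e e', (transEdges θ u)[k]? = some e ∧ (transEdges θ v)[k]? = some e' ∧
        edgeEnd θ e = edgeEnd θ e'
    then 2 * base
    else 2 * base - 1

/-- The relation `∼` on `C = {(k,α) : 0 ≤ k ≤ ℓ, α ∈ T¹}`:
`(k,α) ∼ (k',β)` iff `k = k'` and `D(α,β) ≥ k`. -/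
def simRel (θ : FreeMonoid A →* WithOne S)
    (p q : {p : ℕ × FreeMonoid A // p.1 ≤ ell S}) : Prop :=
  p.val.1 = q.val.1 ∧ lcD θ p.val.2 q.val.2 ≥ p.val.1

/-- The vertex set of the Chiswell tree: `∼`-classes `[k,α]`. -/
def CVert (θ : FreeMonoid A →* WithOne S) : Type _ := Quot (simRel θ)

/-- The edge relation of the Chiswell graph: the edges are `[k,α] — [k+1,α]`
for `0 ≤ k < ℓ` and `α ∈ T¹`. -/
def edgeRel (θ : FreeMonoid A →* WithOne S) (v w : CVert θ) : Prop :=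
  ∃ (k : ℕ) (α : FreeMonoid A) (hk : k + 1 ≤ ell S),
    v = Quot.mk (simRel θ) ⟨(k, α), Nat.le_of_succ_le hk⟩ ∧
    w = Quot.mk (simRel θ) ⟨(k + 1, α), hk⟩

/-- The Chiswell graph `𝒞`. -/
def CGraph (θ : FreeMonoid A →* WithOne S) : SimpleGraph (CVert θ) :=
  SimpleGraph.fromRel (edgeRel θ)

/-- The depth function of the Chiswell tree: `δ([k,α]) = k`. -/
def depth (θ : FreeMonoid A →* WithOne S) : CVert θ → ℕ :=
  Quot.lift (fun p => p.val.1) (fun _ _ h => h.1)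


section GreenOrders

variable {M : Type*} [Monoid M]

lemma leJ_trans {a b c : M} (hab : leJ a b) (hbc : leJ b c) : leJ a c := by
  obtain ⟨x, y, rfl⟩ := hab
  obtain ⟨x', y', rfl⟩ := hbc
  exact ⟨x * x', y' * y, by simp only [mul_assoc]⟩

lemma ltJ_trans {a b c : M} (hab : ltJ a b) (hbc : ltJ b c) : ltJ a c :=
  ⟨leJ_trans hab.1 hbc.1, fun hca => hbc.2 (leJ_trans hca hab.1)⟩

lemma ltJ_irrefl (a : M) : ¬ ltJ a a := fun h => h.2 h.1

lemma leR_trans {a b c : M} (hab : leR a b) (hbc : leR b c) : leR a c := by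
  obtain ⟨x, rfl⟩ := hab
  obtain ⟨y, rfl⟩ := hbc
  exact ⟨y * x, by simp only [mul_assoc]⟩

/-- Stability of finite monoids: `s ≤_J s z` already gives `s ≤_R s z`. -/
lemma leR_mul_of_eq_mul_mul [Finite M] {s x z : M} (h : s = x * s * z) : leR s (s * z) := by
  have hpow : ∀ n, s = x ^ n * s * z ^ n := by
    intro n
    induction n with
    | zero => simp
    | succ n ih =>
      calc s = x ^ n * s * z ^ n := ih
        _ = x ^ n * (x * s * z) * z ^ n := by rw [← h]
        _ = x ^ (n + 1) * s * z ^ (n + 1) := by rw [pow_succ, pow_succ']; simp only [mul_assoc]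
  have hperiod : ∀ i d, z ^ i = z ^ (i + (d + 1)) → leR s (s * z) := by
    intro i d hz
    refine ⟨z ^ d, ?_⟩
    calc s = x ^ i * s * z ^ (i + (d + 1)) := by rw [← hz]; exact hpow i
      _ = (x ^ i * s * z ^ i) * (z * z ^ d) := by rw [pow_add, pow_succ']; simp only [mul_assoc]
      _ = s * z * z ^ d := by rw [← hpow i, mul_assoc]
  obtain ⟨i, j, hne, hz⟩ := Finite.exists_ne_map_eq_of_infinite fun n : ℕ => z ^ n
  rcases Nat.lt_or_gt_of_ne hne with hij | hij
  · obtain ⟨d, rfl⟩ := Nat.exists_eq_add_of_lt hij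
    exact hperiod i d hz
  · obtain ⟨d, rfl⟩ := Nat.exists_eq_add_of_lt hij
    exact hperiod j d hz.symm

lemma lt_card_of_ltJ_chain [Finite M] {c : ℕ → M} {k : ℕ}
    (hc : ∀ i < k, ltJ (c (i + 1)) (c i)) : k < Nat.card M := by
  have hlt : ∀ i j, i < j → j ≤ k → ltJ (c j) (c i) := by
    intro i j hij
    induction j, hij using Nat.le_induction with
    | base => exact fun hik => hc i (by omega)
    | succ j hij ih => exact fun hjk => ltJ_trans (hc j (by omega)) (ih (by omega))
  have hinj : Function.Injective fun i : Fin (k + 1) => c i := by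
    intro i j hij
    replace hij : c i = c j := hij
    by_contra hne
    rcases Nat.lt_or_gt_of_ne (Fin.val_injective.ne hne) with h | h
    · exact ltJ_irrefl (c j) (hij ▸ hlt i j h (by omega))
    · exact ltJ_irrefl (c i) (hij ▸ hlt j i h (by omega))
  simpa using Nat.card_le_card_of_injective _ hinj

lemma bddAbove_ltJ_chain_lengths [Finite M] (x : M) :
    BddAbove {k | ∃ c : ℕ → M, c k = x ∧ ∀ i < k, ltJ (c (i + 1)) (c i)} :=
  ⟨Nat.card M, fun _ ⟨_, _, hc⟩ => (lt_card_of_ltJ_chain hc).le⟩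

lemma exists_ltJ_chain_height [Finite M] (x : M) :
    ∃ c : ℕ → M, c (height x) = x ∧ ∀ i < height x, ltJ (c (i + 1)) (c i) :=
  Nat.sSup_mem (s := {k | ∃ c : ℕ → M, c k = x ∧ ∀ i < k, ltJ (c (i + 1)) (c i)})
    ⟨0, fun _ => x, rfl, fun _ hi => absurd hi (Nat.not_lt_zero _)⟩
    (bddAbove_ltJ_chain_lengths x)

lemma height_lt_of_ltJ [Finite M] {x y : M} (h : ltJ x y) : height y < height x := by
  obtain ⟨c, hcy, hc⟩ := exists_ltJ_chain_height y
  suffices hmem : height y + 1 ≤ height x by omega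
  refine le_csSup (bddAbove_ltJ_chain_lengths x)
    ⟨fun i => if i ≤ height y then c i else x, by simp, fun i hi => ?_⟩
  rcases Nat.lt_or_ge i (height y) with hi' | hi'
  · simpa [hi'.le, Nat.succ_le_of_lt hi'] using hc i hi'
  · obtain rfl : i = height y := by omega
    simpa [hcy] using h

lemma height_le_sSup_height [Finite M] (x : M) :
    height x ≤ sSup (Set.range (height : M → ℕ)) :=
  le_csSup ⟨Nat.card M, by
    rintro _ ⟨y, rfl⟩
    exact (lt_card_of_ltJ_chain (exists_ltJ_chain_height y).choose_spec.2).le⟩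
    (Set.mem_range_self x)

end GreenOrders

instance instFiniteWithOne {T : Type*} [Finite T] : Finite (WithOne T) :=
  inferInstanceAs (Finite (Option T))

lemma two_mul_height_le_ell [Finite S] (x : WithOne S) : 2 * height x ≤ ell S :=
  Nat.mul_le_mul_left 2 (height_le_sSup_height x)

lemma mul_coe_mul_ne_one (x y : WithOne S) (s : S) : x * s * y ≠ 1 := by
  induction x using WithOne.cases_on <;> induction y using WithOne.cases_on <;>
    simp [← WithOne.coe_mul]

lemma coe_ltJ_one (s : S) : ltJ (s : WithOne S) 1 :=
  ⟨⟨s, 1, by simp⟩, fun ⟨x, y, h⟩ => mul_coe_mul_ne_one x y s h.symm⟩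

lemma ell_pos [Finite S] [Nonempty S] : 0 < ell S := by
  obtain ⟨s⟩ := ‹Nonempty S›
  have h1 := height_lt_of_ltJ (coe_ltJ_one s)
  have h2 := two_mul_height_le_ell (s : WithOne S)
  omega

section TransitionEdges

variable {θ : FreeMonoid A →* WithOne S}

lemma IsTransitionEdge.edgeEnd_ltJ [Finite S] (hsur : Function.Surjective θ)
    {e : WithOne S × A} {c : WithOne S} (he : IsTransitionEdge θ e.1 e.2) (hle : leR e.1 c) :
    ltJ (edgeEnd θ e) c := by
  obtain ⟨t, a⟩ := e
  obtain ⟨p, rfl⟩ := hle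
  refine ⟨⟨1, p * θ (FreeMonoid.of a), by simp [edgeEnd, mul_assoc]⟩, ?_⟩
  rintro ⟨x, y, hxy⟩
  have hJ : c * p = x * (c * p) * (θ (FreeMonoid.of a) * y * p) := by
    conv_lhs => rw [hxy]
    simp only [edgeEnd, mul_assoc]
  obtain ⟨m, hm⟩ := leR_mul_of_eq_mul_mul hJ
  obtain ⟨w, hw⟩ := hsur (y * p * m)
  refine he ⟨w, ?_⟩
  rw [hw]
  conv_rhs => rw [hm]
  simp only [mul_assoc]

lemma IsTransitionEdge.of_mul_left {s t : WithOne S} {a : A}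
    (h : IsTransitionEdge θ (s * t) a) : IsTransitionEdge θ t a :=
  fun ⟨w, hw⟩ => h ⟨w, by rw [mul_assoc, mul_assoc, ← mul_assoc t, hw]⟩

lemma mem_transEdgesFrom {w : List A} {s : WithOne S} {e : WithOne S × A}
    (he : e ∈ transEdgesFrom θ s w) : IsTransitionEdge θ e.1 e.2 ∧ leR e.1 s := by
  induction w generalizing s with
  | nil => simp [transEdgesFrom] at he
  | cons a w ih =>
    rw [transEdgesFrom, List.mem_append] at he
    rcases he with he | he
    · split_ifs at he with ht
      · rw [List.mem_singleton] at he
        subst he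
        exact ⟨ht, 1, (mul_one s).symm⟩
      · simp at he
    · exact (ih he).imp_right fun h => leR_trans h ⟨_, rfl⟩

lemma pairwise_transEdgesFrom [Finite S] (hsur : Function.Surjective θ) (s : WithOne S)
    (w : List A) :
    (transEdgesFrom θ s w).Pairwise fun e e' => ltJ (edgeEnd θ e') (edgeEnd θ e) := by
  induction w generalizing s with
  | nil => simp [transEdgesFrom]
  | cons a w ih =>
    rw [transEdgesFrom, List.pairwise_append]
    refine ⟨by split_ifs <;> simp, ih _, fun e he e' he' => ?_⟩
    split_ifs at he with ht
    · rw [List.mem_singleton] at he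
      subst he
      obtain ⟨ht', hle⟩ := mem_transEdgesFrom he'
      exact IsTransitionEdge.edgeEnd_ltJ hsur ht' hle
    · simp at he

lemma height_edgeEnd_lt [Finite S] (hsur : Function.Surjective θ) {u : FreeMonoid A}
    {i j : ℕ} {e e' : WithOne S × A} (hij : i < j) (he : (transEdges θ u)[i]? = some e)
    (he' : (transEdges θ u)[j]? = some e') : height (edgeEnd θ e) < height (edgeEnd θ e') := by
  obtain ⟨hi, rfl⟩ := List.getElem?_eq_some_iff.mp he
  obtain ⟨hj, rfl⟩ := List.getElem?_eq_some_iff.mp he'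
  exact height_lt_of_ltJ
    (List.pairwise_iff_getElem.mp (pairwise_transEdgesFrom hsur _ _) i j hi hj hij)

lemma transEdgesFrom_append (w₁ w₂ : List A) (s : WithOne S) :
    transEdgesFrom θ s (w₁ ++ w₂) =
      transEdgesFrom θ s w₁ ++ transEdgesFrom θ (s * θ (FreeMonoid.ofList w₁)) w₂ := by
  induction w₁ generalizing s with
  | nil => simp [transEdgesFrom]
  | cons a w₁ ih =>
    rw [List.cons_append, transEdgesFrom, transEdgesFrom, ih, List.append_assoc,
      FreeMonoid.ofList_cons, map_mul, mul_assoc]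

lemma transEdges_mul (u v : FreeMonoid A) :
    transEdges θ (u * v) = transEdges θ u ++ transEdgesFrom θ (θ u) (FreeMonoid.toList v) := by
  rw [transEdges, FreeMonoid.toList_mul, transEdgesFrom_append, one_mul,
    FreeMonoid.ofList_toList]
  rfl

lemma transEdgesFrom_mul_left (w : List A) (s t : WithOne S) :
    transEdgesFrom θ (s * t) w = (transEdgesFrom θ t w).flatMap
      fun e => if IsTransitionEdge θ (s * e.1) e.2 then [(s * e.1, e.2)] else [] := by
  induction w generalizing t with
  | nil => simp [transEdgesFrom]
  | cons a w ih =>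
    rw [transEdgesFrom, transEdgesFrom, List.flatMap_append, mul_assoc, ih]
    congr 1
    by_cases ht : IsTransitionEdge θ t a
    · simp [ht]
    · simp [ht, mt IsTransitionEdge.of_mul_left ht]

end TransitionEdges

section KRExpansion

variable {θ : FreeMonoid A →* WithOne S}

lemma KRrel_equivalence : Equivalence (KRrel θ) where
  refl u := by
    by_cases h : u = 1
    · exact Or.inl ⟨h, h⟩
    · exact Or.inr ⟨h, h, rfl, rfl⟩
  symm
    | Or.inl ⟨h₁, h₂⟩ => Or.inl ⟨h₂, h₁⟩
    | Or.inr ⟨h₁, h₂, h₃, h₄⟩ => Or.inr ⟨h₂, h₁, h₃.symm, h₄.symm⟩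
  trans
    | Or.inl ⟨h₁, _⟩, Or.inl ⟨_, g₂⟩ => Or.inl ⟨h₁, g₂⟩
    | Or.inl ⟨_, h₂⟩, Or.inr ⟨g₁, _⟩ => absurd h₂ g₁
    | Or.inr ⟨_, h₂, _⟩, Or.inl ⟨g₁, _⟩ => absurd g₁ h₂
    | Or.inr ⟨h₁, _, h₃, h₄⟩, Or.inr ⟨_, g₂, g₃, g₄⟩ => Or.inr ⟨h₁, g₂, h₃.trans g₃, h₄.trans g₄⟩

lemma KRrel.mul_right {β β' : FreeMonoid A} (h : KRrel θ β β') (α : FreeMonoid A) :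
    KRrel θ (β * α) (β' * α) := by
  rcases h with ⟨rfl, rfl⟩ | ⟨h₁, h₂, h₃, h₄⟩
  · exact KRrel_equivalence.refl _
  · refine Or.inr ⟨fun h => h₁ (mul_eq_one'.mp h).1, fun h => h₂ (mul_eq_one'.mp h).1,
      by rw [map_mul, map_mul, h₃], ?_⟩
    rw [transEdges_mul, transEdges_mul, h₃, h₄]

lemma KRrel.mul_left (β : FreeMonoid A) {α α' : FreeMonoid A} (h : KRrel θ α α') :
    KRrel θ (β * α) (β * α') := by
  rcases h with ⟨rfl, rfl⟩ | ⟨h₁, h₂, h₃, h₄⟩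
  · exact KRrel_equivalence.refl _
  · refine Or.inr ⟨fun h => h₁ (mul_eq_one'.mp h).2, fun h => h₂ (mul_eq_one'.mp h).2,
      by rw [map_mul, map_mul, h₃], ?_⟩
    rw [transEdges_mul, transEdges_mul, ← mul_one (θ β), transEdgesFrom_mul_left,
      transEdgesFrom_mul_left]
    change _ ++ List.flatMap _ (transEdges θ α) = _ ++ List.flatMap _ (transEdges θ α')
    rw [h₄]

end KRExpansion

section LengthFunction

variable {θ : FreeMonoid A →* WithOne S}

lemma bddAbove_xi_set (u v : FreeMonoid A) : BddAbove {i | i ≤ (transEdges θ u).length ∧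
    (transEdges θ u).take i = (transEdges θ v).take i} :=
  ⟨(transEdges θ u).length, fun _ hi => hi.1⟩

lemma xi_mem (u v : FreeMonoid A) : xi θ u v ≤ (transEdges θ u).length ∧
    (transEdges θ u).take (xi θ u v) = (transEdges θ v).take (xi θ u v) :=
  Nat.sSup_mem (s := {i | i ≤ (transEdges θ u).length ∧
      (transEdges θ u).take i = (transEdges θ v).take i}) ⟨0, Nat.zero_le _, by simp⟩
    (bddAbove_xi_set u v)

lemma le_xi {u v : FreeMonoid A} {k : ℕ} (hk : k ≤ (transEdges θ u).length)
    (htake : (transEdges θ u).take k = (transEdges θ v).take k) : k ≤ xi θ u v :=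
  le_csSup (bddAbove_xi_set u v) ⟨hk, htake⟩

lemma xi_le_xi_mul_right (α β β' : FreeMonoid A) :
    xi θ β β' ≤ xi θ (β * α) (β' * α) := by
  obtain ⟨hk, htake⟩ := xi_mem (θ := θ) β β'
  have hk' : xi θ β β' ≤ (transEdges θ β').length := by
    have := congrArg List.length htake
    simp only [List.length_take] at this
    omega
  apply le_xi
  · rw [transEdges_mul, List.length_append]
    omega
  · rw [transEdges_mul, transEdges_mul, List.take_append_of_le_length hk,
      List.take_append_of_le_length hk', htake]

lemma exists_getElem?_xi_sub_one {u v : FreeMonoid A} (hk : 0 < xi θ u v) :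
    ∃ e, (transEdges θ u)[xi θ u v - 1]? = some e :=
  ⟨_, List.getElem?_eq_getElem (by have := (xi_mem (θ := θ) u v).1; omega)⟩

def SameNextEnd (θ : FreeMonoid A →* WithOne S) (u v : FreeMonoid A) (k : ℕ) : Prop :=
  ∃ e e', (transEdges θ u)[k]? = some e ∧ (transEdges θ v)[k]? = some e' ∧
    edgeEnd θ e = edgeEnd θ e'

lemma lcD_of_KRrel {u v : FreeMonoid A} (h : KRrel θ u v) : lcD θ u v = ell S :=
  if_pos h

lemma lcD_of_xi_eq_zero {u v : FreeMonoid A} (hKR : ¬ KRrel θ u v) (hk : xi θ u v = 0) :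
    lcD θ u v = 0 := by
  rw [lcD, if_neg hKR, if_pos hk]

lemma lcD_of_getElem? {u v : FreeMonoid A} {e : WithOne S × A} (hKR : ¬ KRrel θ u v)
    (hk : 0 < xi θ u v) (he : (transEdges θ u)[xi θ u v - 1]? = some e) :
    lcD θ u v = if SameNextEnd θ u v (xi θ u v) then 2 * height (edgeEnd θ e)
      else 2 * height (edgeEnd θ e) - 1 := by
  rw [lcD, if_neg hKR, if_neg hk.ne']
  simp only [he, Option.elim_some]
  rfl

lemma lcD_le_ell [Finite S] (u v : FreeMonoid A) : lcD θ u v ≤ ell S := by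
  by_cases hKR : KRrel θ u v
  · exact (lcD_of_KRrel hKR).le
  rcases Nat.eq_zero_or_pos (xi θ u v) with hk | hk
  · simp [lcD_of_xi_eq_zero hKR hk]
  obtain ⟨e, he⟩ := exists_getElem?_xi_sub_one hk
  have := two_mul_height_le_ell (edgeEnd θ e)
  rw [lcD_of_getElem? hKR hk he]
  split_ifs <;> omega

lemma lcD_lt_ell [Finite S] (hsur : Function.Surjective θ) (hpos : 0 < ell S)
    {u v : FreeMonoid A} (hKR : ¬ KRrel θ u v) : lcD θ u v < ell S := by
  rcases Nat.eq_zero_or_pos (xi θ u v) with hk | hk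
  · rwa [lcD_of_xi_eq_zero hKR hk]
  obtain ⟨e, he⟩ := exists_getElem?_xi_sub_one hk
  have := two_mul_height_le_ell (edgeEnd θ e)
  rw [lcD_of_getElem? hKR hk he]
  split_ifs with hsame
  · obtain ⟨f, _, hf, -⟩ := hsame
    have := height_edgeEnd_lt hsur (by omega) he hf
    have := two_mul_height_le_ell (edgeEnd θ f)
    omega
  · omega

lemma lcD_le_lcD_mul_right [Finite S] (hsur : Function.Surjective θ) (α β β' : FreeMonoid A) :
    lcD θ β β' ≤ lcD θ (β * α) (β' * α) := by
  by_cases hKR' : KRrel θ (β * α) (β' * α)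
  · exact (lcD_le_ell β β').trans (lcD_of_KRrel hKR').ge
  have hKR : ¬ KRrel θ β β' := fun h => hKR' (h.mul_right α)
  rcases Nat.eq_zero_or_pos (xi θ β β') with hk | hk
  · simp [lcD_of_xi_eq_zero hKR hk]
  have hkk' := xi_le_xi_mul_right (θ := θ) α β β'
  obtain ⟨e, he⟩ := exists_getElem?_xi_sub_one hk
  obtain ⟨e', he'⟩ := exists_getElem?_xi_sub_one (lt_of_lt_of_le hk hkk')
  have hlen := (xi_mem (θ := θ) β β').1
  have hprefix : ∀ i < xi θ β β', (transEdges θ (β * α))[i]? = (transEdges θ β)[i]? :=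
    fun i hi => by rw [transEdges_mul, List.getElem?_append_left (by omega)]
  rw [lcD_of_getElem? hKR hk he, lcD_of_getElem? hKR' (by omega) he']
  rcases hkk'.lt_or_eq with hlt | heq
  · have := height_edgeEnd_lt hsur (by omega) ((hprefix _ (by omega)).trans he) he'
    split_ifs <;> omega
  · -- same branch point: the next-edge condition passes from `β, β'` to `βα, β'α`
    rw [← heq, hprefix _ (by omega), he] at he'
    obtain rfl := Option.some.inj he'
    rw [← heq]
    split_ifs with h h' <;> try omega
    obtain ⟨f, f', hf, hf', hff'⟩ := h
    refine absurd ⟨f, f', ?_, ?_, hff'⟩ h'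
    · rw [transEdges_mul, List.getElem?_append_left (List.getElem?_eq_some_iff.mp hf).1, hf]
    · rw [transEdges_mul, List.getElem?_append_left (List.getElem?_eq_some_iff.mp hf').1, hf']

end LengthFunction

section RightAction

variable {θ : FreeMonoid A →* WithOne S}

def mulRightRep (α : FreeMonoid A) (p : {p : ℕ × FreeMonoid A // p.1 ≤ ell S}) :
    {p : ℕ × FreeMonoid A // p.1 ≤ ell S} :=
  ⟨(p.1.1, p.1.2 * α), p.2⟩

lemma simRel_mulRightRep [Finite S] (hsur : Function.Surjective θ) (α : FreeMonoid A)
    {p q : {p : ℕ × FreeMonoid A // p.1 ≤ ell S}} (h : simRel θ p q) :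
    simRel θ (mulRightRep α p) (mulRightRep α q) :=
  ⟨h.1, h.2.trans (lcD_le_lcD_mul_right hsur α _ _)⟩

def rightAction [Finite S] (hsur : Function.Surjective θ) (α : FreeMonoid A) :
    CVert θ → CVert θ :=
  Quot.map (mulRightRep α) fun _ _ => simRel_mulRightRep hsur α

lemma KRrel_of_mk_ell_eq [Finite S] (hsur : Function.Surjective θ) (hpos : 0 < ell S)
    {α α' : FreeMonoid A}
    (h : Quot.mk (simRel θ) ⟨(ell S, α), le_rfl⟩ = Quot.mk (simRel θ) ⟨(ell S, α'), le_rfl⟩) :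
    KRrel θ α α' := by
  let R : {p : ℕ × FreeMonoid A // p.1 ≤ ell S} → {p : ℕ × FreeMonoid A // p.1 ≤ ell S} →
      Prop := fun p q => p.1.1 = q.1.1 ∧ (p.1.1 = ell S → KRrel θ p.1.2 q.1.2)
  have hR : Equivalence R :=
    { refl := fun _ => ⟨rfl, fun _ => KRrel_equivalence.refl _⟩
      symm := fun ⟨h₁, h₂⟩ =>
        ⟨h₁.symm, fun hq => KRrel_equivalence.symm (h₂ (h₁.trans hq))⟩
      trans := fun ⟨h₁, h₂⟩ ⟨g₁, g₂⟩ =>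
        ⟨h₁.trans g₁, fun hp => KRrel_equivalence.trans (h₂ hp) (g₂ (h₁.symm.trans hp))⟩ }
  have hle : simRel θ ≤ R := fun p q hpq =>
    ⟨hpq.1, fun hp => by_contra fun hKR =>
      (lcD_lt_ell hsur hpos hKR).not_ge (hp.symm.trans_le hpq.2)⟩
  exact (hR.eqvGen_iff.mp (Relation.EqvGen.mono hle _ _ (Quot.eqvGen_exact h))).2 rfl

lemma ne_of_edgeRel {v w : CVert θ} (h : edgeRel θ v w) : v ≠ w := by
  obtain ⟨k, β, hk, rfl, rfl⟩ := h
  intro hvw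
  exact absurd (congrArg (depth θ) hvw) (show k ≠ k + 1 by omega)

variable [Finite S] (hsur : Function.Surjective θ)

lemma rightAction_congr {α α' : FreeMonoid A} (h : KRrel θ α α') :
    rightAction hsur α = rightAction hsur α' := by
  funext v
  induction v using Quot.ind with
  | mk p => exact Quot.sound ⟨rfl, (lcD_of_KRrel (h.mul_left p.1.2)).ge.trans' p.2⟩

lemma depth_rightAction (α : FreeMonoid A) (v : CVert θ) :
    depth θ (rightAction hsur α v) = depth θ v := by
  induction v using Quot.ind
  rfl

lemma edgeRel_rightAction (α : FreeMonoid A) {v w : CVert θ} (h : edgeRel θ v w) :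
    edgeRel θ (rightAction hsur α v) (rightAction hsur α w) := by
  obtain ⟨k, β, hk, rfl, rfl⟩ := h
  exact ⟨k, β * α, hk, rfl, rfl⟩

lemma adj_rightAction (α : FreeMonoid A) {v w : CVert θ} (h : (CGraph θ).Adj v w) :
    (CGraph θ).Adj (rightAction hsur α v) (rightAction hsur α w) := by
  rw [CGraph, SimpleGraph.fromRel_adj] at h ⊢
  rcases h.2 with h | h
  · exact ⟨ne_of_edgeRel (edgeRel_rightAction hsur α h), Or.inl (edgeRel_rightAction hsur α h)⟩
  · exact ⟨(ne_of_edgeRel (edgeRel_rightAction hsur α h)).symm,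
      Or.inr (edgeRel_rightAction hsur α h)⟩

lemma rightAction_mul (α α' : FreeMonoid A) :
    rightAction hsur (α * α') = rightAction hsur α' ∘ rightAction hsur α := by
  funext v
  induction v using Quot.ind with
  | mk p => exact congrArg (Quot.mk _) (Subtype.ext (Prod.ext rfl (mul_assoc _ _ _).symm))

lemma rightAction_one : rightAction hsur (1 : FreeMonoid A) = id := by
  funext v
  induction v using Quot.ind with
  | mk p => exact congrArg (Quot.mk _) (Subtype.ext (Prod.ext rfl (mul_one _)))

lemma KRrel_of_rightAction_eq (hproper : ∀ u : FreeMonoid A, θ u = 1 → u = 1)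
    {α α' : FreeMonoid A} (h : rightAction hsur α = rightAction hsur α') : KRrel θ α α' := by
  rcases isEmpty_or_nonempty A with hA | hA
  · rw [Subsingleton.elim α α']
    exact KRrel_equivalence.refl _
  obtain ⟨a⟩ := hA
  obtain ⟨s, -⟩ := WithOne.ne_one_iff_exists.mp
    fun h : θ (FreeMonoid.of a) = 1 => FreeMonoid.of_ne_one a (hproper _ h)
  have hpos : 0 < ell S := have : Nonempty S := ⟨s⟩; ell_pos
  have hmk := congrFun h (Quot.mk _ ⟨(ell S, 1), le_rfl⟩)
  simp only [rightAction, Quot.map, mulRightRep, one_mul] at hmk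
  exact KRrel_of_mk_ell_eq hsur hpos hmk

end RightAction

end KRHolonomy

open KRHolonomy in
theorem holonomy_right_action_general {A S : Type*} [Semigroup S] [Finite S]
    (θ : FreeMonoid A →* WithOne S)
    (hgen : ∀ s : S, ∃ u : FreeMonoid A, θ u = (s : WithOne S))
    (hproper : ∀ u : FreeMonoid A, θ u = 1 → u = 1) :
    ∃ ε : FreeMonoid A → CVert θ → CVert θ,
      (∀ (α β : FreeMonoid A) (k : ℕ) (hk : k ≤ ell S),
          ε α (Quot.mk (simRel θ) ⟨(k, β), hk⟩) = Quot.mk (simRel θ) ⟨(k, β * α), hk⟩) ∧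
      (∀ α α' : FreeMonoid A, KRrel θ α α' → ε α = ε α') ∧
      (∀ (α : FreeMonoid A) (v : CVert θ), depth θ (ε α v) = depth θ v) ∧
      (∀ (α : FreeMonoid A) (v w : CVert θ),
          (CGraph θ).Adj v w → (CGraph θ).Adj (ε α v) (ε α w)) ∧
      (∀ α α' : FreeMonoid A, ε (α * α') = ε α' ∘ ε α) ∧
      ε 1 = id ∧
      (∀ α α' : FreeMonoid A, ε α = ε α' → KRrel θ α α') := by
  have hsur : Function.Surjective θ := fun m => WithOne.cases_on m ⟨1, map_one θ⟩ hgen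
  exact ⟨rightAction hsur, fun _ _ _ _ => rfl, fun _ _ => rightAction_congr hsur,
    depth_rightAction hsur, fun α _ _ => adj_rightAction hsur α, rightAction_mul hsur,
    rightAction_one hsur, fun _ _ => KRrel_of_rightAction_eq hsur hproper⟩

open KRHolonomy in
/-- **right action.** The right action of `T¹ = KR_right(S,A)¹` on the
Chiswell tree `𝒞` given by `[k,β]·α = [k,βα]` is well defined (independent of
representatives, both of the pair `(k,β)` and of `α`), for each `α ∈ T¹` the map
`[k,β] ↦ [k,βα]` is an elliptic map of `(𝒞,[0,1])` (it preserves the depth of every vertex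
and maps edges to edges), and the resulting map `ε' : T¹ → EM(𝒞,[0,1])^op` is an injective
monoid homomorphism, i.e. `α ↦ ε'_α` is an injective monoid anti-homomorphism
(`ε'_{αα'} = ε'_{α'} ∘ ε'_α` and `ε'_1 = id`). -/
theorem holonomy_right_action {A S : Type*} [Finite A] [Semigroup S] [Finite S]
    (θ : FreeMonoid A →* WithOne S)
    (hgen : ∀ s : S, ∃ u : FreeMonoid A, θ u = (s : WithOne S))
    (hproper : ∀ u : FreeMonoid A, θ u = 1 → u = 1) :
    ∃ ε : FreeMonoid A → CVert θ → CVert θ,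
      (∀ (α β : FreeMonoid A) (k : ℕ) (hk : k ≤ ell S),
          ε α (Quot.mk (simRel θ) ⟨(k, β), hk⟩) = Quot.mk (simRel θ) ⟨(k, β * α), hk⟩) ∧
      (∀ α α' : FreeMonoid A, KRrel θ α α' → ε α = ε α') ∧
      (∀ (α : FreeMonoid A) (v : CVert θ), depth θ (ε α v) = depth θ v) ∧
      (∀ (α : FreeMonoid A) (v w : CVert θ),
          (CGraph θ).Adj v w → (CGraph θ).Adj (ε α v) (ε α w)) ∧
      (∀ α α' : FreeMonoid A, ε (α * α') = ε α' ∘ ε α) ∧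
      ε 1 = id ∧
      (∀ α α' : FreeMonoid A, ε α = ε α' → KRrel θ α α') :=
  holonomy_right_action_general θ hgen hproper
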